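/- arXiv:1509.03915 — 2 statements merged into one kernel-verified Lean document; each statement's English description precedes it below -/
import Mathlib

section
/- In a fractional housing market (N, H, ≿, e), every DL-efficient assignment is SD-efficient: if there is no assignment y with y(i) ≿_i^DL x(i) for all i ∈ N and y(i) ≻_i^DL x(i) for some i, then there is no assignment y with y(i) ≿_i^SD x(i) for all i ∈ N and y(i) ≻_i^SD x(i) for some i. -/
open Finset
open scoped Classical

variable {N H : Type*}

noncomputable section

/-- The total weight that allocation `p` puts on houses weakly preferred to `h`
(with respect to the preference relation `R`, where `R a b` means `a ≿ b`). -/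
def upperSum [Fintype H] (R : H → H → Prop) (p : H → ℝ) (h : H) : ℝ :=
  ∑ h' ∈ Finset.univ.filter (fun h' => R h' h), p h'

/-- `p ≿^SD q` (stochastic dominance). -/
def SDge [Fintype H] (R : H → H → Prop) (p q : H → ℝ) : Prop :=
  ∀ h, upperSum R q h ≤ upperSum R p h

/-- `p ≻^SD q`. -/
def SDgt [Fintype H] (R : H → H → Prop) (p q : H → ℝ) : Prop :=
  SDge R p q ∧ ¬ SDge R q p

/-- Total weight that `p` puts on the indifference class of `h`. -/
def classSum [Fintype H] (R : H → H → Prop) (p : H → ℝ) (h : H) : ℝ :=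
  ∑ h' ∈ Finset.univ.filter (fun h' => R h' h ∧ R h h'), p h'

/-- `p ~^DL q`: all indifference-class sums agree. -/
def DLsim [Fintype H] (R : H → H → Prop) (p q : H → ℝ) : Prop :=
  ∀ h, classSum R p h = classSum R q h

/-- `p ≻^DL q`: there is an indifference class (represented by a house `h`) on which
`p` puts strictly more weight, while all strictly more preferred classes have equal sums. -/
def DLgt [Fintype H] (R : H → H → Prop) (p q : H → ℝ) : Prop :=
  ∃ h, classSum R q h < classSum R p h ∧
    ∀ h', R h' h ∧ ¬ R h h' → classSum R p h' = classSum R q h'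

/-- `p ≿^DL q`. -/
def DLge [Fintype H] (R : H → H → Prop) (p q : H → ℝ) : Prop :=
  DLgt R p q ∨ DLsim R p q

/-- An allocation is a nonnegative function on houses. -/
def IsAlloc (p : H → ℝ) : Prop := ∀ h, 0 ≤ p h

/-- A preference is a total preorder (total and transitive relation). -/
def TotalPreorderRel (R : H → H → Prop) : Prop := Total R ∧ Transitive R

/-- An assignment with respect to endowments `e`. -/
def IsAssignment [Fintype N] (e x : N → H → ℝ) : Prop :=
  (∀ i, IsAlloc (x i)) ∧ ∀ h, ∑ i, x i h = ∑ i, e i h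

/-- SD-efficiency. -/
def SDEfficient [Fintype N] [Fintype H] (R : N → H → H → Prop) (e x : N → H → ℝ) : Prop :=
  ¬ ∃ y, IsAssignment e y ∧ (∀ i, SDge (R i) (y i) (x i)) ∧ ∃ i, SDgt (R i) (y i) (x i)

/-- SD individual rationality. -/
def SDIR [Fintype H] (R : N → H → H → Prop) (e x : N → H → ℝ) : Prop :=
  ∀ i, SDge (R i) (x i) (e i)

/-- SD core stability. -/
def SDCoreStable [Fintype N] [Fintype H] (R : N → H → H → Prop) (e x : N → H → ℝ) : Prop :=
  ¬ ∃ (S : Finset N) (y : N → H → ℝ), S.Nonempty ∧ (∀ i ∈ S, IsAlloc (y i)) ∧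
      (∀ h, ∑ i ∈ S, y i h = ∑ i ∈ S, e i h) ∧ ∀ i ∈ S, SDgt (R i) (y i) (x i)

/-- SD strict core membership. -/
def SDStrictCore [Fintype N] [Fintype H] (R : N → H → H → Prop) (e x : N → H → ℝ) : Prop :=
  ¬ ∃ (S : Finset N) (y : N → H → ℝ), S.Nonempty ∧ (∀ i ∈ S, IsAlloc (y i)) ∧
      (∀ h, ∑ i ∈ S, y i h = ∑ i ∈ S, e i h) ∧
      (∀ i ∈ S, SDge (R i) (y i) (x i)) ∧ ∃ i ∈ S, SDgt (R i) (y i) (x i)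

/-- The allocation consisting of exactly one unit of house `h`. -/
def delta [DecidableEq H] (h : H) : H → ℝ := fun h' => if h' = h then 1 else 0

end

noncomputable section Aux
variable {H : Type*} [Fintype H] {R : H → H → Prop}

/-- Strict upper sum: weight on houses strictly preferred to `h`. -/
def SUS (R : H → H → Prop) (p : H → ℝ) (h : H) : ℝ :=
  ∑ h' ∈ Finset.univ.filter (fun h' => R h' h ∧ ¬ R h h'), p h'

lemma upperSum_split (p : H → ℝ) (h : H) :
    upperSum R p h = classSum R p h + SUS R p h := by
  classical
  rw [upperSum, classSum, SUS,
    ← Finset.sum_filter_add_sum_filter_not (Finset.univ.filter (fun h' => R h' h))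
      (fun h' => R h h'), Finset.filter_filter, Finset.filter_filter]

lemma exists_min (hTot : Total R) (hTr : Transitive R) :
    ∀ S : Finset H, S.Nonempty → ∃ g ∈ S, ∀ h' ∈ S, R h' g := by
  intro S
  induction S using Finset.induction_on with
  | empty => intro h; simp at h
  | @insert a S ha ih =>
    intro _
    rcases S.eq_empty_or_nonempty with rfl | hS
    · refine ⟨a, by simp, ?_⟩
      intro h' hh'
      simp only [Finset.mem_insert, Finset.notMem_empty, or_false] at hh'
      subst hh'
      exact (hTot h' h').elim id id
    · obtain ⟨g, hg, hmin⟩ := ih hS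
      rcases hTot a g with hag | hga
      · refine ⟨g, Finset.mem_insert_of_mem hg, ?_⟩
        intro h' hh'
        rcases Finset.mem_insert.1 hh' with rfl | hh'
        · exact hag
        · exact hmin h' hh'
      · refine ⟨a, Finset.mem_insert_self a S, ?_⟩
        intro h' hh'
        rcases Finset.mem_insert.1 hh' with rfl | hh'
        · exact (hTot h' h').elim id id
        · exact hTr (hmin h' hh') hga

lemma SUS_eq (hTot : Total R) (hTr : Transitive R) (p q : H → ℝ) :
    ∀ n (h : H), (Finset.univ.filter (fun h' => R h' h)).card ≤ n →
      (∀ h', R h' h ∧ ¬ R h h' → classSum R p h' = classSum R q h') →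
      SUS R p h = SUS R q h := by
  intro n
  induction n with
  | zero =>
    intro h hcard _
    exfalso
    have hh : h ∈ Finset.univ.filter (fun h' => R h' h) := by
      simp [(hTot h h).elim id id]
    have := Finset.card_pos.mpr ⟨h, hh⟩
    omega
  | succ n ih =>
    intro h hcard hcls
    set S := Finset.univ.filter (fun h' => R h' h ∧ ¬ R h h') with hSdef
    rcases S.eq_empty_or_nonempty with hS | hS
    · rw [SUS, SUS, ← hSdef, hS]; simp
    · obtain ⟨g, hg, hmin⟩ := exists_min hTot hTr S hS
      have hgS : R g h ∧ ¬ R h g := by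
        simpa [hSdef] using hg
      have hgset : Finset.univ.filter (fun h' => R h' g) = S := by
        ext h'
        simp only [hSdef, Finset.mem_filter, Finset.mem_univ, true_and]
        constructor
        · intro hh'
          refine ⟨hTr hh' hgS.1, fun hcon => hgS.2 (hTr hcon hh')⟩
        · intro hh'
          exact hmin h' (by simpa [hSdef] using hh')
      have hsub : ∀ h'', R h'' g ∧ ¬ R g h'' → R h'' h ∧ ¬ R h h'' := by
        intro h'' ⟨h1, h2⟩
        exact ⟨hTr h1 hgS.1, fun hcon => hgS.2 (hTr hcon h1)⟩
      have hcardg : (Finset.univ.filter (fun h' => R h' g)).card ≤ n := by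
        have hsub2 : Finset.univ.filter (fun h' => R h' g) ⊆
            Finset.univ.filter (fun h' => R h' h) := by
          rw [hgset]
          intro h' hh'
          simp only [hSdef, Finset.mem_filter, Finset.mem_univ, true_and] at hh' ⊢
          exact hh'.1
        have hne : h ∉ Finset.univ.filter (fun h' => R h' g) := by
          rw [hgset]
          simp [hSdef, hgS.2]
        have hh : h ∈ Finset.univ.filter (fun h' => R h' h) := by
          simp [(hTot h h).elim id id]
        have := Finset.card_lt_card (Finset.ssubset_iff_of_subset hsub2 |>.mpr ⟨h, hh, hne⟩)
        omega
      have hSUSg : SUS R p g = SUS R q g :=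
        ih g hcardg (fun h'' hh'' => hcls h'' (hsub h'' hh''))
      have hclsg : classSum R p g = classSum R q g := hcls g hgS
      have hp : SUS R p h = classSum R p g + SUS R p g := by
        rw [SUS, ← hSdef, ← hgset, ← upperSum, upperSum_split]
      have hq : SUS R q h = classSum R q g + SUS R q g := by
        rw [SUS, ← hSdef, ← hgset, ← upperSum, upperSum_split]
      rw [hp, hq, hSUSg, hclsg]

lemma sdge_to_dlge (hTot : Total R) (hTr : Transitive R) {p q : H → ℝ}
    (hpq : SDge R p q) : DLge R p q := by
  classical
  by_cases hsim : DLsim R p q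
  · exact Or.inr hsim
  · left
    have : ∃ h0, classSum R p h0 ≠ classSum R q h0 := by
      simpa [DLsim] using hsim
    obtain ⟨h0, hh0⟩ := this
    set D := Finset.univ.filter (fun h => classSum R p h ≠ classSum R q h) with hDdef
    have hDne : D.Nonempty := ⟨h0, by simp [hDdef, hh0]⟩
    have hTot' : Total (fun a b => R b a) := fun a b => (hTot b a)
    have hTr' : Transitive (fun a b : H => R b a) := fun a b c h1 h2 => hTr h2 h1
    obtain ⟨h, hhD, hmax⟩ := exists_min hTot' hTr' D hDne
    have hhD' : classSum R p h ≠ classSum R q h := by simpa [hDdef] using hhD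
    have habove : ∀ h', R h' h ∧ ¬ R h h' → classSum R p h' = classSum R q h' := by
      intro h' ⟨h1, h2⟩
      by_contra hc
      exact h2 (hmax h' (by simp [hDdef, hc]))
    have hSUS : SUS R p h = SUS R q h :=
      SUS_eq hTot hTr p q _ h le_rfl habove
    refine ⟨h, ?_, habove⟩
    have hup := hpq h
    rw [upperSum_split, upperSum_split, hSUS] at hup
    have hle : classSum R q h ≤ classSum R p h := by linarith
    exact lt_of_le_of_ne hle (Ne.symm hhD')

lemma upperSum_eq_of_dlsim (hTot : Total R) (hTr : Transitive R) {p q : H → ℝ}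
    (hsim : DLsim R p q) (h : H) : upperSum R p h = upperSum R q h := by
  rw [upperSum_split, upperSum_split, hsim h,
    SUS_eq hTot hTr p q _ h le_rfl (fun h' _ => hsim h')]

end Aux

/-- every DL-efficient assignment is SD-efficient. -/
theorem dl_efficient_implies_sd_efficient [Fintype N] [Fintype H]
    (R : N → H → H → Prop) (hR : ∀ i, TotalPreorderRel (R i))
    (e : N → H → ℝ) (he : ∀ i, IsAlloc (e i))
    (x : N → H → ℝ) (hx : IsAssignment e x)
    (hDLeff : ¬ ∃ y, IsAssignment e y ∧ (∀ i, DLge (R i) (y i) (x i)) ∧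
        ∃ i, DLgt (R i) (y i) (x i)) :
    SDEfficient R e x := by
  intro ⟨y, hy, hge, i0, hgt⟩
  apply hDLeff
  refine ⟨y, hy, fun i => sdge_to_dlge (hR i).1 (hR i).2 (hge i), i0, ?_⟩
  rcases sdge_to_dlge (hR i0).1 (hR i0).2 hgt.1 with hdl | hsim
  · exact hdl
  · exfalso
    apply hgt.2
    intro h
    rw [upperSum_eq_of_dlsim (hR i0).1 (hR i0).2 hsim h]
end

section
/- Fix agents N = {1,…,5}, houses H = {h1,…,h5}, endowments e(1) = ½δ_{h1} + ½δ_{h2}, e(2) = ½δ_{h3} + ½δ_{h5}, e(3) = ½δ_{h1} + ½δ_{h4}, e(4) = ½δ_{h2} + ½δ_{h4}, e(5) = ½δ_{h3} + ½δ_{h5}, and the linear-order profile given by: agent 1: h3 ≻ h1 ≻ h2 ≻ h4 ≻ h5; agent 2: h5 ≻ h1 ≻ h3 ≻ h2 ≻ h4; agent 3: h1 ≻ h4 ≻ h2 ≻ h3 ≻ h5; agent 4: h2 ≻ h4 ≻ h1 ≻ h3 ≻ h5; agent 5: h5 ≻ h3 ≻ h1 ≻ h2 ≻ h4. Then the unique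 assignment that is SD-individually rational and SD-efficient with respect to this profile is y with y(1) = ½δ_{h2} + ½δ_{h3}, y(2) = ½δ_{h1} + ½δ_{h5}, y(3) = ½δ_{h1} + ½δ_{h4}, y(4) = ½δ_{h2} + ½δ_{h4}, y(5) = ½δ_{h3} + ½δ_{h5}. -/
open Finset
open scoped Classical

variable {N H : Type*}

/-- A (strict) linear order relation: total, transitive and antisymmetric
(`R a b` means `a ≿ b`). -/
def LinOrderRel (R : H → H → Prop) : Prop := Total R ∧ Transitive R ∧ AntiSymmetric R

/-- Endowments: e(1) = ½δ₁+½δ₂, e(2) = ½δ₃+½δ₅, e(3) = ½δ₁+½δ₄,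
e(4) = ½δ₂+½δ₄, e(5) = ½δ₃+½δ₅ (houses h1,…,h5 encoded as 0,…,4). -/
noncomputable def e5 : Fin 5 → Fin 5 → ℝ :=
  ![![1/2, 1/2, 0, 0, 0],
    ![0, 0, 1/2, 0, 1/2],
    ![1/2, 0, 0, 1/2, 0],
    ![0, 1/2, 0, 1/2, 0],
    ![0, 0, 1/2, 0, 1/2]]

/-- Ranks (0 = best): agent 1: h3≻h1≻h2≻h4≻h5; agent 2: h5≻h1≻h3≻h2≻h4;
agent 3: h1≻h4≻h2≻h3≻h5; agent 4: h2≻h4≻h1≻h3≻h5; agent 5: h5≻h3≻h1≻h2≻h4. -/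
def rank14 : Fin 5 → Fin 5 → ℕ :=
  ![![1, 2, 0, 3, 4], ![1, 3, 2, 4, 0], ![0, 2, 3, 1, 4], ![2, 0, 3, 1, 4], ![2, 3, 1, 4, 0]]

/-- The preference profile. -/
def R14 (i : Fin 5) (h h' : Fin 5) : Prop := rank14 i h ≤ rank14 i h'

/-- The assignment y: y(1) = ½δ₂+½δ₃, y(2) = ½δ₁+½δ₅, and agents 3, 4, 5 keep
their endowments. -/
noncomputable def y14 : Fin 5 → Fin 5 → ℝ :=
  ![![0, 1/2, 1/2, 0, 0],
    ![1/2, 0, 0, 0, 1/2],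
    ![1/2, 0, 0, 1/2, 0],
    ![0, 1/2, 0, 1/2, 0],
    ![0, 0, 1/2, 0, 1/2]]

/-! Every agent's SD-individual-rationality constraint at the worst house it is endowed with
demands one unit in total from the houses it ranks at least as high. These five demands involve
disjoint entries and together exhaust the supply of five units, so they are tight and every other
entry vanishes; the remaining constraints leave the one-parameter family `irFamily14 t`, in which
agent 1 holds `t·h1 + ½h2 + (½ - t)h3` and agent 2 holds `(½ - t)h1 + t·h3 + ½h5`. The assignment
`y14 = irFamily14 0` weakly SD-dominates every member with `t ≥ 0`.

Conversely, an assignment weakly SD-dominating `y14` gives two agents at least `½` of each house,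
column by column (agents 2, 5 on h5; then 1, 5 on h3; 2, 3 on h1; 1, 4 on h2; 3, 4 on h4), so it
is `y14`. Hence `y14` is SD-efficient, and an SD-efficient individually rational `x`, being weakly
dominated by `y14`, has to dominate `y14` back and is therefore `y14`. -/

theorem SDge.refl [Fintype H] (R : H → H → Prop) (p : H → ℝ) : SDge R p p :=
  fun _ => le_rfl

theorem SDEfficient.sdge_of_forall_sdge [Fintype N] [Fintype H] {R : N → H → H → Prop}
    {e x y : N → H → ℝ} (hx : SDEfficient R e x) (hy : IsAssignment e y)
    (hyx : ∀ i, SDge (R i) (y i) (x i)) (i : N) : SDge (R i) (x i) (y i) := by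
  by_contra hxy
  exact hx ⟨y, hy, hyx, i, hyx i, hxy⟩

theorem sdEfficient_of_forall_sdge_imp_eq [Fintype N] [Fintype H] {R : N → H → H → Prop}
    {e x : N → H → ℝ} (h : ∀ z, IsAssignment e z → (∀ i, SDge (R i) (z i) (x i)) → z = x) :
    SDEfficient R e x := by
  rintro ⟨z, hz, hzx, i, -, hxz⟩
  exact hxz (h z hz hzx ▸ SDge.refl _ _)

noncomputable def irFamily14 (t : ℝ) : Fin 5 → Fin 5 → ℝ :=
  ![![t, 1/2, 1/2 - t, 0, 0],
    ![1/2 - t, 0, t, 0, 1/2],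
    ![1/2, 0, 0, 1/2, 0],
    ![0, 1/2, 0, 1/2, 0],
    ![0, 0, 1/2, 0, 1/2]]

theorem sum_e5 (h : Fin 5) : ∑ i, e5 i h = 1 := by
  fin_cases h <;> simp [e5, Fin.sum_univ_five, Matrix.cons_val] <;> norm_num

theorem IsAssignment.column_sum_e5 {x : Fin 5 → Fin 5 → ℝ} (hx : IsAssignment e5 x) (h : Fin 5) :
    x 0 h + x 1 h + x 2 h + x 3 h + x 4 h = 1 :=
  (Fin.sum_univ_five _).symm.trans ((hx.2 h).trans (sum_e5 h))

theorem isAssignment_y14 : IsAssignment e5 y14 := by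
  refine ⟨fun i h => ?_, fun h => ?_⟩
  · fin_cases i <;> fin_cases h <;> norm_num [y14]
  · fin_cases h <;> simp [y14, e5, Fin.sum_univ_five, Matrix.cons_val]

theorem sdir_y14 : SDIR R14 e5 y14 := by
  intro i h
  fin_cases i <;> fin_cases h <;>
    simp [upperSum, sum_filter, R14, rank14, Fin.sum_univ_five, e5, y14, Matrix.cons_val]

theorem eq_y14_of_forall_sdge {z : Fin 5 → Fin 5 → ℝ} (hz : IsAssignment e5 z)
    (hzy : ∀ i, SDge (R14 i) (z i) (y14 i)) : z = y14 := by
  obtain ⟨h14, h44, h02, h42, h20, h10, h01, h31, h23, h33⟩ :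
      1/2 ≤ z 1 4 ∧ 1/2 ≤ z 4 4 ∧ 1/2 ≤ z 0 2 ∧ 1 ≤ z 4 2 + z 4 4 ∧ 1/2 ≤ z 2 0 ∧
      1 ≤ z 1 0 + z 1 4 ∧ 1 ≤ z 0 0 + z 0 1 + z 0 2 ∧ 1/2 ≤ z 3 1 ∧ 1 ≤ z 2 0 + z 2 3 ∧
      1 ≤ z 3 1 + z 3 3 := by
    refine ⟨?_, ?_, ?_, ?_, ?_, ?_, ?_, ?_, ?_, ?_⟩ <;>
      [have := hzy 1 4; have := hzy 4 4; have := hzy 0 2; have := hzy 4 2; have := hzy 2 0;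
        have := hzy 1 0; have := hzy 0 1; have := hzy 3 1; have := hzy 2 3; have := hzy 3 3] <;>
      simp [upperSum, sum_filter, R14, rank14, Fin.sum_univ_five, y14, Matrix.cons_val] at this <;>
      linarith
  have hcol := hz.column_sum_e5
  have hnonneg := hz.1
  funext i h
  fin_cases i <;> fin_cases h <;> simp [y14, Matrix.cons_val] <;>
    linarith [hcol 0, hcol 1, hcol 2, hcol 3, hcol 4,
      hnonneg 0 0, hnonneg 0 1, hnonneg 0 2, hnonneg 0 3, hnonneg 0 4,
      hnonneg 1 0, hnonneg 1 1, hnonneg 1 2, hnonneg 1 3, hnonneg 1 4,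
      hnonneg 2 0, hnonneg 2 1, hnonneg 2 2, hnonneg 2 3, hnonneg 2 4,
      hnonneg 3 0, hnonneg 3 1, hnonneg 3 2, hnonneg 3 3, hnonneg 3 4,
      hnonneg 4 0, hnonneg 4 1, hnonneg 4 2, hnonneg 4 3, hnonneg 4 4]

theorem eq_irFamily14_of_sdir {x : Fin 5 → Fin 5 → ℝ} (hx : IsAssignment e5 x)
    (hIR : SDIR R14 e5 x) : x = irFamily14 (x 1 2) := by
  obtain ⟨h00, h01, h14, h12, h20, h23, h31, h33, h44, h42⟩ :
      1/2 ≤ x 0 0 + x 0 2 ∧ 1 ≤ x 0 0 + x 0 1 + x 0 2 ∧ 1/2 ≤ x 1 4 ∧ 1 ≤ x 1 0 + x 1 2 + x 1 4 ∧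
      1/2 ≤ x 2 0 ∧ 1 ≤ x 2 0 + x 2 3 ∧ 1/2 ≤ x 3 1 ∧ 1 ≤ x 3 1 + x 3 3 ∧
      1/2 ≤ x 4 4 ∧ 1 ≤ x 4 2 + x 4 4 := by
    refine ⟨?_, ?_, ?_, ?_, ?_, ?_, ?_, ?_, ?_, ?_⟩ <;>
      [have := hIR 0 0; have := hIR 0 1; have := hIR 1 4; have := hIR 1 2; have := hIR 2 0;
        have := hIR 2 3; have := hIR 3 1; have := hIR 3 3; have := hIR 4 4; have := hIR 4 2] <;>
      simp [upperSum, sum_filter, R14, rank14, Fin.sum_univ_five, e5, Matrix.cons_val] at this <;>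
      linarith
  have hcol := hx.column_sum_e5
  have hnonneg := hx.1
  funext i h
  fin_cases i <;> fin_cases h <;> simp [irFamily14, Matrix.cons_val] <;>
    linarith [hcol 0, hcol 1, hcol 2, hcol 3, hcol 4,
      hnonneg 0 0, hnonneg 0 1, hnonneg 0 2, hnonneg 0 3, hnonneg 0 4,
      hnonneg 1 0, hnonneg 1 1, hnonneg 1 2, hnonneg 1 3, hnonneg 1 4,
      hnonneg 2 0, hnonneg 2 1, hnonneg 2 2, hnonneg 2 3, hnonneg 2 4,
      hnonneg 3 0, hnonneg 3 1, hnonneg 3 2, hnonneg 3 3, hnonneg 3 4,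
      hnonneg 4 0, hnonneg 4 1, hnonneg 4 2, hnonneg 4 3, hnonneg 4 4]

theorem sdge_y14_irFamily14 {t : ℝ} (ht : 0 ≤ t) (i : Fin 5) :
    SDge (R14 i) (y14 i) (irFamily14 t i) := by
  intro h
  fin_cases i <;> fin_cases h <;>
    simp [upperSum, sum_filter, R14, rank14, Fin.sum_univ_five, y14, irFamily14,
      Matrix.cons_val] <;> linarith

/-- `y14` is the unique SD-individually rational and SD-efficient
assignment for this profile. -/
theorem unique_ir_eff_assignment_profile14 :
    (IsAssignment e5 y14 ∧ SDIR R14 e5 y14 ∧ SDEfficient R14 e5 y14) ∧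
    ∀ x : Fin 5 → Fin 5 → ℝ, IsAssignment e5 x → SDIR R14 e5 x → SDEfficient R14 e5 x →
      x = y14 := by
  refine ⟨⟨isAssignment_y14, sdir_y14,
    sdEfficient_of_forall_sdge_imp_eq fun _ => eq_y14_of_forall_sdge⟩, fun x hx hIR hEff => ?_⟩
  have hyx : ∀ i, SDge (R14 i) (y14 i) (x i) := by
    rw [eq_irFamily14_of_sdir hx hIR]
    exact sdge_y14_irFamily14 (hx.1 1 2)
  exact eq_y14_of_forall_sdge hx (hEff.sdge_of_forall_sdge isAssignment_y14 hyx)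
end
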